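/- arXiv:2603.09459 — 2 statements merged into one kernel-verified Lean document; each statement's English description precedes it below -/
import Mathlib

section
/- Let X be a complete separable metric space and p ∈ (1,∞). Equip AC^p([a,b],X) with the metric d_p(c,c') := (∫_a^b d_X(c(t), c'(t))^p dt)^{1/p} (this is a genuine metric because continuous curves that agree Lebesgue-a.e. are equal). Then for every t ∈ [a,b], the evaluation map c ↦ c(t) is Borel measurable from (AC^p([a,b],X), d_p) to X. -/
set_option linter.unusedSectionVars false

open MeasureTheory ENNReal Set Filter Topology TopologicalSpace

noncomputable section

/-- The `L^p` (extended) distance between two maps with values in a metric space. -/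
def Dp {α : Type*} [MeasurableSpace α] {N : Type*} [MetricSpace N]
    (μ : Measure α) (p : ℝ≥0∞) (f g : α → N) : ℝ≥0∞ :=
  eLpNorm (fun x => dist (f x) (g x)) p μ

theorem Dp_self {α : Type*} [MeasurableSpace α] {N : Type*} [MetricSpace N]
    (μ : Measure α) (p : ℝ≥0∞) (f : α → N) : Dp μ p f f = 0 := by
  unfold Dp; simp only [dist_self]; exact eLpNorm_zero'

theorem Dp_comm {α : Type*} [MeasurableSpace α] {N : Type*} [MetricSpace N]
    (μ : Measure α) (p : ℝ≥0∞) (f g : α → N) : Dp μ p f g = Dp μ p g f := by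
  unfold Dp; simp only [dist_comm]

theorem Dp_triangle {α : Type*} [MeasurableSpace α] {N : Type*} [MetricSpace N]
    {μ : Measure α} {p : ℝ≥0∞} (hp : 1 ≤ p) {f g k : α → N}
    (hf : AEStronglyMeasurable f μ) (hg : AEStronglyMeasurable g μ)
    (hk : AEStronglyMeasurable k μ) :
    Dp μ p f k ≤ Dp μ p f g + Dp μ p g k := by
  have h1 : Dp μ p f k ≤
      eLpNorm ((fun x => dist (f x) (g x)) + fun x => dist (g x) (k x)) p μ := by
    refine eLpNorm_mono fun x => ?_
    simp only [Pi.add_apply, Real.norm_eq_abs]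
    rw [abs_of_nonneg dist_nonneg]
    exact (dist_triangle (f x) (g x) (k x)).trans (le_abs_self _)
  exact h1.trans (eLpNorm_add_le (hf.dist hg) (hg.dist hk) hp)

/-- Absolutely continuous curves: `c ∈ AC^p([a,b], X)`. -/
def MemACp {X : Type*} [PseudoMetricSpace X] (p : ℝ≥0∞) (a b : ℝ) (c : ℝ → X) : Prop :=
  ∃ m : ℝ → ℝ, MemLp m p (volume.restrict (Set.Icc a b)) ∧
    ∀ s t : ℝ, a ≤ s → s ≤ t → t ≤ b → dist (c s) (c t) ≤ ∫ r in s..t, m r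

/-- The space `AC^p([a,b],X)` of absolutely continuous curves (such curves are
automatically continuous on `[a,b]`; curves are normalized outside `[a,b]` by the
clamped value, so that a curve is determined by its restriction to `[a,b]`). -/
def ACpS (p : ℝ≥0∞) (a b : ℝ) (X : Type*) [MetricSpace X] : Type _ :=
  {c : ℝ → X // ContinuousOn c (Set.Icc a b) ∧ MemACp p a b c ∧
    ∀ t : ℝ, c t = c (max a (min t b))}

namespace ACpS

variable {p : ℝ≥0∞} {a b : ℝ} {X : Type*} [MetricSpace X]

/-- The pseudo-emetric `d_p` on `AC^p([a,b],X)`. -/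
def pem (p : ℝ≥0∞) (a b : ℝ) (X : Type*) [MetricSpace X] (hp : 1 ≤ p) :
    PseudoEMetricSpace (ACpS p a b X) where
  edist c c' := Dp (volume.restrict (Set.Icc a b)) p c.1 c'.1
  edist_self c := Dp_self _ p c.1
  edist_comm c c' := Dp_comm _ p c.1 c'.1
  edist_triangle c c' c'' :=
    Dp_triangle hp (c.2.1.aestronglyMeasurable measurableSet_Icc)
      (c'.2.1.aestronglyMeasurable measurableSet_Icc)
      (c''.2.1.aestronglyMeasurable measurableSet_Icc)

instance [hp : Fact (1 ≤ p)] : PseudoEMetricSpace (ACpS p a b X) := pem p a b X hp.out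
instance [Fact (1 ≤ p)] : MeasurableSpace (ACpS p a b X) := borel _
instance [Fact (1 ≤ p)] : BorelSpace (ACpS p a b X) := ⟨rfl⟩

theorem edist_def [Fact (1 ≤ p)] (c c' : ACpS p a b X) :
    edist c c' = Dp (volume.restrict (Set.Icc a b)) p c.1 c'.1 := rfl

end ACpS

/-! The `d_p`-distance of two curves vanishes only if they agree a.e. on `[a,b]`, hence
everywhere on `[a,b]` by continuity, hence everywhere by the clamping normalization.

For measurability of `c ↦ c t` it suffices, `X` being separable, that `c ↦ dist (c t) x` is
measurable for every `x`. By continuity of `c` at `t`, this map is the pointwise limit of the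
averages `c ↦ ⨍ s in [a,b] ∩ [t - 1/(n+1), t + 1/(n+1)], dist (c s) x`, and each average is
Lipschitz for `d_p`: it is controlled by the `L¹` distance of the curves on `[a,b]`,
which Hölder's inequality bounds by `(b - a) ^ (1 - 1/p)` times `d_p`. -/

theorem measurable_of_measurable_dist {α X : Type*} [MeasurableSpace α] [PseudoMetricSpace X]
    [SeparableSpace X] [MeasurableSpace X] [BorelSpace X] {f : α → X}
    (h : ∀ x, Measurable fun a => dist (f a) x) : Measurable f := by
  have : SecondCountableTopology X := UniformSpace.secondCountable_of_separable X
  have hballs : IsTopologicalBasis {u : Set X | ∃ x r, u = Metric.ball x r} := by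
    refine isTopologicalBasis_of_isOpen_of_nhds ?_ fun y u hy hu => ?_
    · rintro u ⟨x, r, rfl⟩
      exact Metric.isOpen_ball
    · obtain ⟨r, hr, hru⟩ := Metric.isOpen_iff.1 hu y hy
      exact ⟨Metric.ball y r, ⟨y, r, rfl⟩, Metric.mem_ball_self hr, hru⟩
  rw [BorelSpace.measurable_eq (α := X), hballs.borel_eq_generateFrom]
  refine measurable_generateFrom ?_
  rintro u ⟨x, r, rfl⟩
  exact h x measurableSet_Iio

theorem ContinuousOn.tendsto_setAverage {X E ι : Type*} [TopologicalSpace X] [MeasurableSpace X]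
    [OpensMeasurableSpace X] [NormedAddCommGroup E] [NormedSpace ℝ E] [CompleteSpace E]
    [SecondCountableTopologyEither X E] {μ : Measure X} [IsLocallyFiniteMeasure μ]
    {f : X → E} {t : Set X} {x : X} (hf : ContinuousOn f t) (hx : x ∈ t) (ht : MeasurableSet t)
    {s : ι → Set X} {l : Filter ι} (hs : Tendsto s l (𝓝[t] x).smallSets)
    (hμs : ∀ᶠ i in l, μ.real (s i) ≠ 0) :
    Tendsto (fun i => ⨍ y in s i, f y ∂μ) l (𝓝 (f x)) := by
  rw [← tendsto_sub_nhds_zero_iff]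
  refine (hf.integral_sub_linear_isLittleO_ae (μ := μ) hx ht hs).tendsto_inv_smul_nhds_zero
    |>.congr' ?_
  filter_upwards [hμs] with i hi
  rw [setAverage_eq, smul_sub, inv_smul_smul₀ hi]

theorem measureReal_Icc_inter_closedBall_pos {a b t δ : ℝ} (hab : a < b) (ht : t ∈ Icc a b)
    (hδ : 0 < δ) : 0 < volume.real (Icc a b ∩ Metric.closedBall t δ) := by
  rw [Real.closedBall_eq_Icc, Icc_inter_Icc, Real.volume_real_Icc, lt_max_iff, sub_pos]
  left
  exact max_lt (lt_min hab (by linarith [ht.1])) (lt_min (by linarith [ht.2]) (by linarith))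

namespace ACpS

variable {p : ℝ≥0∞} {a b : ℝ} {X : Type*} [MetricSpace X] [Fact (1 ≤ p)]

theorem eq_of_edist_eq_zero (hab : a < b) {c c' : ACpS p a b X} (h : edist c c' = 0) :
    c = c' := by
  have hdist : ContinuousOn (fun s => dist (c.1 s) (c'.1 s)) (Icc a b) :=
    continuous_dist.comp_continuousOn (c.2.1.prodMk c'.2.1)
  have hp0 : p ≠ 0 := (zero_lt_one.trans_le Fact.out).ne'
  rw [edist_def, Dp, eLpNorm_eq_zero_iff (hdist.aestronglyMeasurable measurableSet_Icc) hp0] at h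
  have heq := Measure.eqOn_Icc_of_ae_eq volume hab.ne h hdist continuousOn_const
  refine Subtype.ext (funext fun s => ?_)
  rw [c.2.2.2 s, c'.2.2.2 s]
  exact dist_eq_zero.1 (heq ⟨le_max_left _ _, max_le hab.le (min_le_right _ _)⟩)

theorem lipschitzWith_setIntegral_dist {I : Set ℝ} (hI : I ⊆ Icc a b) (x : X) :
    LipschitzWith (volume (Icc a b) ^ (1 - 1 / p.toReal)).toNNReal
      fun c : ACpS p a b X => ∫ s in I, dist (c.1 s) x := by
  have hexp : 0 ≤ 1 - 1 / p.toReal := by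
    rcases eq_or_ne p ∞ with rfl | hp
    · simp
    have : 1 ≤ p.toReal := by simpa using ENNReal.toReal_mono hp (Fact.out : 1 ≤ p)
    exact sub_nonneg.2 ((div_le_one (by linarith)).2 this)
  have hfin : volume (Icc a b) ^ (1 - 1 / p.toReal) ≠ ∞ :=
    ENNReal.rpow_ne_top_of_nonneg hexp (by simp [Real.volume_Icc])
  have hint (c : ACpS p a b X) : IntegrableOn (fun s => dist (c.1 s) x) I :=
    ((continuous_id.dist continuous_const).comp_continuousOn c.2.1).integrableOn_Icc.mono_set hI
  intro c c'
  have hmeas : AEStronglyMeasurable (fun s => dist (c.1 s) (c'.1 s)) (volume.restrict (Icc a b)) :=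
    (continuous_dist.comp_continuousOn (c.2.1.prodMk c'.2.1)).aestronglyMeasurable
      measurableSet_Icc
  rw [ENNReal.coe_toNNReal hfin]
  calc edist (∫ s in I, dist (c.1 s) x) (∫ s in I, dist (c'.1 s) x)
      = ‖∫ s in I, (dist (c.1 s) x - dist (c'.1 s) x)‖ₑ := by
        rw [edist_eq_enorm_sub, integral_sub (hint c) (hint c')]
    _ ≤ ∫⁻ s in I, ‖dist (c.1 s) x - dist (c'.1 s) x‖ₑ :=
        enorm_integral_le_lintegral_enorm _
    _ ≤ ∫⁻ s in Icc a b, ‖dist (c.1 s) (c'.1 s)‖ₑ := by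
        refine (lintegral_mono fun s => ?_).trans (lintegral_mono_set hI)
        rw [enorm_le_iff_norm_le, Real.norm_eq_abs, Real.norm_eq_abs, abs_of_nonneg dist_nonneg]
        exact abs_dist_sub_le _ _ _
    _ = eLpNorm (fun s => dist (c.1 s) (c'.1 s)) 1 (volume.restrict (Icc a b)) :=
        eLpNorm_one_eq_lintegral_enorm.symm
    _ ≤ edist c c' *
          volume.restrict (Icc a b) univ ^ (1 / (1 : ℝ≥0∞).toReal - 1 / p.toReal) :=
        eLpNorm_le_eLpNorm_mul_rpow_measure_univ (Fact.out : 1 ≤ p) hmeas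
    _ = volume (Icc a b) ^ (1 - 1 / p.toReal) * edist c c' := by
        rw [Measure.restrict_apply_univ, ENNReal.toReal_one, div_one, mul_comm]

theorem measurable_eval [MeasurableSpace X] [BorelSpace X] [SeparableSpace X] (hab : a < b)
    {t : ℝ} (ht : t ∈ Icc a b) : Measurable fun c : ACpS p a b X => c.1 t := by
  refine measurable_of_measurable_dist fun x => ?_
  set I : ℕ → Set ℝ := fun n => Icc a b ∩ Metric.closedBall t (1 / (n + 1))
  have hI : Tendsto I atTop (𝓝[Icc a b] t).smallSets := by
    refine tendsto_smallSets_iff.2 fun u hu => ?_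
    obtain ⟨ε, hε, hεu⟩ := Metric.mem_nhdsWithin_iff.1 hu
    filter_upwards [(tendsto_order.1 tendsto_one_div_add_atTop_nhds_zero_nat).2 ε hε] with n hn
    exact fun s hs => hεu ⟨Metric.closedBall_subset_ball hn hs.2, hs.1⟩
  have hIpos : ∀ᶠ n in atTop, volume.real (I n) ≠ 0 :=
    Eventually.of_forall fun n => (measureReal_Icc_inter_closedBall_pos hab ht (by positivity)).ne'
  refine measurable_of_tendsto_metrizable (f := fun n c => ⨍ s in I n, dist (c.1 s) x)
    (fun n => ?_) (tendsto_pi_nhds.2 fun c => ?_)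
  · simp_rw [setAverage_eq, smul_eq_mul]
    exact (continuous_const.mul
      (lipschitzWith_setIntegral_dist (p := p) inter_subset_left x).continuous).measurable
  · exact ((continuous_id.dist continuous_const).comp_continuousOn c.2.1).tendsto_setAverage ht
      measurableSet_Icc hI hIpos

end ACpS

theorem stmt2_general {X : Type*} [MetricSpace X] [MeasurableSpace X] [BorelSpace X]
    [TopologicalSpace.SeparableSpace X]
    (p a b : ℝ) (hab : a < b) [Fact (1 ≤ ENNReal.ofReal p)] :
    (∀ c c' : ACpS (ENNReal.ofReal p) a b X, edist c c' = 0 → c = c') ∧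
    (∀ t ∈ Set.Icc a b, Measurable fun c : ACpS (ENNReal.ofReal p) a b X => c.1 t) :=
  ⟨fun _ _ h => ACpS.eq_of_edist_eq_zero hab h, fun _ ht => ACpS.measurable_eval hab ht⟩

/-- On `AC^p([a,b],X)` (`X` complete separable, `1 < p < ∞`), the distance
`d_p(c,c') = (∫_a^b d(c t, c' t)^p dt)^{1/p}` is a genuine metric (continuous curves that
agree Lebesgue-a.e. are equal), and for every `t ∈ [a,b]` the evaluation map `c ↦ c t`
is Borel measurable from `(AC^p([a,b],X), d_p)` to `X`. -/
theorem stmt2 {X : Type*} [MetricSpace X] [MeasurableSpace X] [BorelSpace X]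
    [CompleteSpace X] [TopologicalSpace.SeparableSpace X]
    (p a b : ℝ) (hp : 1 < p) (hab : a < b) [Fact (1 ≤ ENNReal.ofReal p)] :
    (∀ c c' : ACpS (ENNReal.ofReal p) a b X, edist c c' = 0 → c = c') ∧
    (∀ t ∈ Set.Icc a b, Measurable fun c : ACpS (ENNReal.ofReal p) a b X => c.1 t) :=
  stmt2_general p a b hab
end
end

section
/- Let X be a complete metric space and let f : [a,b] → X (a < b reals) be Borel measurable with separable range such that ∫_a^b d_X(f(t), y₀) dt < ∞ for some y₀ ∈ X. Then: (i) essVar_X(f;(a,b)) < ∞ if and only if sup_{0<τ<b−a} ∫_a^{b−τ} d_X(f(t), f(t+τ))/τ dt < ∞; and (ii) if these quantities are finite, then for all a ≤ s < t ≤ b one has essVar_X(f;(s,t)) = sup_{0<τ<t−s} ∫_s^{t−τ} d_X(f(u), f(u+τ))/τ du. -/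
set_option linter.unusedSectionVars false

open MeasureTheory ENNReal Set Filter Topology TopologicalSpace

noncomputable section

def essVar {N : Type*} [MetricSpace N] (f : ℝ → N) (s : Set ℝ) : ℝ≥0∞ :=
  ⨅ (g : ℝ → N) (_ : f =ᵐ[volume.restrict s] g), eVariationOn g s

/-!
Write `S(s,t) = sup_τ τ⁻¹ ∫_s^{t-τ} d(f u, f(u+τ)) du` (this is `shiftVar f s t`).

`S ≤ essVar`: if `g = f` a.e. on `(s,t)` and `W x` is the variation of `g` on `(s,t) ∩ (-∞,x]`,
then `d(g u, g(u+τ)) ≤ W(u+τ) - W u`, and since `W` is monotone and bounded by the variation `V`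
of `g`, integrating over `u` gives at most `τ V`.

`essVar ≤ S`: at right Lebesgue points `x ≤ x'` of `f`, integrating the triangle inequality for
`φ = d(f ·, f x')` over `(x, x+τ]` and comparing `φ` with its translate by `τ` gives
`τ d(f x, f x') ≤ ∫_x^{x'} d(f y, f(y+τ)) dy + o(τ)`. So `f` has variation at most `S` on the
full-measure set `L` of such points, and extending `f` from `L` by its left limits along `L`
(which exist by completeness) does not increase the variation. Almost every point is a Lebesgue
point because `d(f ·, e)` is integrable for `e` in a countable dense subset of the range.
-/

section Variation

variable {α E : Type*} [LinearOrder α] [PseudoEMetricSpace E]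

theorem eVariationOn_le_of_forall_finite {f : α → E} {s : Set α} {C : ℝ≥0∞}
    (h : ∀ t ⊆ s, t.Finite → eVariationOn f t ≤ C) : eVariationOn f s ≤ C := by
  refine iSup_le fun ⟨n, u, hu, us⟩ => ?_
  calc ∑ i ∈ Finset.range n, edist (f (u (i + 1))) (f (u i))
      ≤ eVariationOn f (u '' Iic n) :=
        eVariationOn.sum_le_of_monotoneOn_Iic (hu.monotoneOn _) fun i hi => mem_image_of_mem u hi
    _ ≤ C := h _ (image_subset_iff.2 fun i _ => us i) ((finite_Iic n).image u)

theorem eVariationOn_le_of_mapClusterPt_nhdsWithin_Iic [TopologicalSpace α] [OrderTopology α]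
    {f g : α → E} {s t : Set α} (hg : ∀ x ∈ t, MapClusterPt (g x) (𝓝[s ∩ Iic x] x) f) :
    eVariationOn g t ≤ eVariationOn f s := by
  classical
  refine eVariationOn_le_of_forall_finite fun P hPt hP => ?_
  by_contra! hlt
  -- Along `Filter.pi G`, a map `σ` eventually sends each `x ∈ P` to a point of `s` just left of
  -- `x` where `f` is close to `g x`; on the finite set `P` such a `σ` is monotone.
  let G : α → Filter α := fun x =>
    if x ∈ P then 𝓝[s ∩ Iic x] x ⊓ comap f (𝓝 (g x)) else pure x
  have hG : ∀ x ∈ P, G x = 𝓝[s ∩ Iic x] x ⊓ comap f (𝓝 (g x)) := fun x hx => if_pos hx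
  have : ∀ x, (G x).NeBot := fun x => by
    by_cases hx : x ∈ P
    · rw [hG x hx, ← map_neBot_iff f, Filter.push_pull, inf_comm]
      exact hg x (hPt hx)
    · simp only [G, if_neg hx]; infer_instance
  have hGle : ∀ x ∈ P, Tendsto (fun σ : α → α => σ x) (Filter.pi G) (𝓝[s ∩ Iic x] x) :=
    fun x hx => (tendsto_eval_pi G x).mono_right ((hG x hx).le.trans inf_le_left)
  have hlarge : ∀ᶠ σ in Filter.pi G, eVariationOn f s < eVariationOn (f ∘ σ) P := by
    refine eVariationOn.lowerSemicontinuous_aux (fun x hx => ?_) hlt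
    exact tendsto_comap.comp ((tendsto_eval_pi G x).mono_right ((hG x hx).le.trans inf_le_right))
  have hmaps : ∀ᶠ σ in Filter.pi G, ∀ x ∈ P, σ x ∈ s ∩ Iic x :=
    hP.eventually_all.2 fun x hx => hGle x hx self_mem_nhdsWithin
  have hsep : ∀ᶠ σ in Filter.pi G, ∀ y ∈ P, ∀ x ∈ P, x < y → x < σ y :=
    hP.eventually_all.2 fun y hy => hP.eventually_all.2 fun x _ => by
      by_cases hxy : x < y
      · filter_upwards [(hGle y hy).mono_right nhdsWithin_le_nhds (Ioi_mem_nhds hxy)] with σ hσ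
        exact fun _ => hσ
      · exact Eventually.of_forall fun _ h => absurd h hxy
  obtain ⟨σ, hσf, hσs, hσP⟩ := (hlarge.and (hmaps.and hsep)).exists
  have hmono : MonotoneOn σ P := fun x hx y hy hxy => by
    rcases hxy.lt_or_eq with hxy | rfl
    · exact ((hσs x hx).2.trans_lt (hσP y hy x hx hxy)).le
    · rfl
  exact (hσf.trans_le
    (eVariationOn.comp_le_of_monotoneOn f σ hmono fun x hx => (hσs x hx).1)).false

end Variation

theorem exists_eqOn_eVariationOn_le {E : Type*} [EMetricSpace E] [CompleteSpace E] (h : ℝ → E)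
    {L U : Set ℝ} (hU : ∀ x ∈ U \ L, (𝓝[L ∩ Iio x] x).NeBot) :
    ∃ g : ℝ → E, EqOn g h L ∧ eVariationOn g U ≤ eVariationOn h L := by
  by_cases hV : BoundedVariationOn h L
  swap
  · exact ⟨h, eqOn_refl _ _, by rw [not_ne_iff.1 hV]; exact le_top⟩
  classical
  have : Nonempty E := ⟨h 0⟩
  refine ⟨fun x => if x ∈ L then h x else limUnder (𝓝[L ∩ Iio x] x) h, fun x hx => if_pos hx,
    eVariationOn_le_of_mapClusterPt_nhdsWithin_Iic fun x hx => ?_⟩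
  by_cases hxL : x ∈ L
  · rw [if_pos hxL]
    exact (tendsto_pure_nhds h x).mapClusterPt.mono (pure_le_nhdsWithin ⟨hxL, self_mem_Iic⟩)
  · rw [if_neg hxL]
    have := hU x ⟨hx, hxL⟩
    obtain ⟨l, hl⟩ := hV.exists_tendsto_left x
    rw [hl.limUnder_eq]
    exact hl.mapClusterPt.mono (nhdsWithin_mono _ (inter_subset_inter_right _ Iio_subset_Iic_self))

theorem nhdsWithin_inter_Iio_neBot_of_ae_mem {L : Set ℝ} {s t x : ℝ}
    (hL : ∀ᵐ y ∂volume.restrict (Ioo s t), y ∈ L) (hx : x ∈ Ioo s t) :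
    (𝓝[L ∩ Iio x] x).NeBot := by
  rw [inter_comm, nhdsWithin_inter', inf_principal_neBot_iff]
  intro V hV
  obtain ⟨l, hlx, hlV⟩ := mem_nhdsLT_iff_exists_Ioo_subset.1 hV
  have hpos : (ae (volume.restrict (Ioo (max l s) x))).NeBot := by
    rw [ae_restrict_neBot, Real.volume_Ioo, ENNReal.ofReal_ne_zero_iff, sub_pos]
    exact max_lt hlx hx.1
  obtain ⟨y, hyL, hy⟩ := ((ae_restrict_of_ae ((ae_restrict_iff' measurableSet_Ioo).1 hL)).and
    (ae_restrict_mem (μ := volume) (measurableSet_Ioo (a := max l s) (b := x)))).exists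
  exact ⟨y, hlV ⟨(le_max_left l s).trans_lt hy.1, hy.2⟩,
    hyL ⟨(le_max_right l s).trans_lt hy.1, hy.2.trans hx.2⟩⟩

theorem Monotone.setLIntegral_sub_comp_add_le {φ : ℝ → ℝ≥0∞} (hφ : Monotone φ) {V : ℝ≥0∞}
    (hV : ∀ x, φ x ≤ V) (hVtop : V ≠ ∞) (s t : ℝ) {τ : ℝ} (hτ : 0 ≤ τ) :
    ∫⁻ u in Ioo s (t - τ), (φ (u + τ) - φ u) ≤ ENNReal.ofReal τ * V := by
  have hconst : ∀ I : Set ℝ, ∫⁻ u in I, φ u ≤ V * volume I := fun I =>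
    (lintegral_mono fun u => hV u).trans_eq (setLIntegral_const I V)
  have hfin : ∫⁻ u in Ioo s (t - τ), φ u ≠ ∞ :=
    ne_top_of_le_ne_top (ENNReal.mul_ne_top hVtop measure_Ioo_lt_top.ne) (hconst _)
  rw [lintegral_sub hφ.measurable hfin (ae_of_all _ fun u => hφ (by linarith)),
    (measurePreserving_add_right volume τ).setLIntegral_comp_emb (measurableEmbedding_addRight τ),
    image_add_const_Ioo, sub_add_cancel, tsub_le_iff_left]
  calc ∫⁻ u in Ioo (s + τ) t, φ u
      ≤ ∫⁻ u in Ioo s (t - τ) ∪ Ico (t - τ) t, φ u := lintegral_mono_set fun u hu => by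
        rcases lt_or_ge u (t - τ) with h | h
        exacts [Or.inl ⟨by linarith [hu.1], h⟩, Or.inr ⟨h, hu.2⟩]
    _ ≤ (∫⁻ u in Ioo s (t - τ), φ u) + ∫⁻ u in Ico (t - τ) t, φ u := lintegral_union_le φ _ _
    _ ≤ (∫⁻ u in Ioo s (t - τ), φ u) + ENNReal.ofReal τ * V := by
        gcongr
        refine (hconst _).trans_eq ?_
        rw [Real.volume_Ico, _root_.sub_sub_cancel, mul_comm]

theorem setLIntegral_edist_comp_add_le_eVariationOn {E : Type*} [PseudoEMetricSpace E]
    (g : ℝ → E) (s t : ℝ) {τ : ℝ} (hτ : 0 < τ) :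
    ∫⁻ u in Ioo s (t - τ), edist (g u) (g (u + τ)) ≤
      ENNReal.ofReal τ * eVariationOn g (Ioo s t) := by
  rcases eq_or_ne (eVariationOn g (Ioo s t)) ∞ with hV | hV
  · simp [hV, ENNReal.mul_top, hτ]
  set W : ℝ → ℝ≥0∞ := fun x => eVariationOn g (Ioo s t ∩ Iic x)
  have hW : Monotone W := fun x y hxy =>
    eVariationOn.mono g (inter_subset_inter_right _ (Iic_subset_Iic.2 hxy))
  have hWV : ∀ x, W x ≤ eVariationOn g (Ioo s t) := fun x => eVariationOn.mono g inter_subset_left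
  refine le_trans (setLIntegral_mono' measurableSet_Ioo fun u hu => ?_)
    (hW.setLIntegral_sub_comp_add_le hWV hV s t hτ.le)
  have hu' : u ∈ Ioo s t := ⟨hu.1, by linarith [hu.2]⟩
  have huτ : u + τ ∈ Ioo s t := ⟨by linarith [hu.1], by linarith [hu.2]⟩
  refine ENNReal.le_sub_of_add_le_left (ne_top_of_le_ne_top hV (hWV u)) ?_
  calc W u + edist (g u) (g (u + τ))
      ≤ W u + eVariationOn g (Ioo s t ∩ Icc u (u + τ)) := by
        gcongr
        exact eVariationOn.edist_le g ⟨hu', le_rfl, by linarith⟩ ⟨huτ, by linarith, le_rfl⟩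
    _ ≤ eVariationOn g ((Ioo s t ∩ Iic u) ∪ (Ioo s t ∩ Icc u (u + τ))) :=
        eVariationOn.add_le_union g fun x hx y hy => hx.2.trans hy.2.1
    _ ≤ W (u + τ) := eVariationOn.mono g <| union_subset
        (inter_subset_inter_right _ (Iic_subset_Iic.2 (by linarith)))
        (inter_subset_inter_right _ Icc_subset_Iic_self)

theorem sum_setLIntegral_Ioc_eq {φ : ℝ → ℝ≥0∞} {u : ℕ → ℝ} (hu : Monotone u) (n : ℕ) :
    ∑ i ∈ Finset.range n, ∫⁻ y in Ioc (u i) (u (i + 1)), φ y = ∫⁻ y in Ioc (u 0) (u n), φ y := by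
  induction n with
  | zero => simp
  | succ n ih =>
    rw [Finset.sum_range_succ, ih, ← lintegral_union measurableSet_Ioc
      (Ioc_disjoint_Ioc_of_le le_rfl), Ioc_union_Ioc_eq_Ioc (hu (Nat.zero_le n)) (hu n.le_succ)]

open IsUnifLocDoublingMeasure in
theorem tendsto_Icc_add_vitaliFamily (x : ℝ) :
    Tendsto (fun τ => Icc x (x + τ)) (𝓝[>] 0) ((vitaliFamily (volume : Measure ℝ) 1).filterAt x) :=
  (Real.tendsto_Icc_vitaliFamily_right x).comp <|
    tendsto_nhdsWithin_of_tendsto_nhds_of_eventually_within _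
      ((continuous_const_add x).tendsto' 0 x (add_zero x) |>.mono_left nhdsWithin_le_nhds)
      (by filter_upwards [self_mem_nhdsWithin] with τ (hτ : 0 < τ) using lt_add_of_pos_right x hτ)

section PseudoEMetric

variable {N : Type*} [PseudoEMetricSpace N]

def shiftVar (f : ℝ → N) (s t : ℝ) : ℝ≥0∞ :=
  ⨆ τ ∈ Ioo (0 : ℝ) (t - s), ∫⁻ u in Icc s (t - τ), edist (f u) (f (u + τ)) / ENNReal.ofReal τ

theorem shiftVar_congr {f g : ℝ → N} {s t : ℝ} (h : EqOn f g (Icc s t)) :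
    shiftVar f s t = shiftVar g s t := by
  refine biSup_congr fun τ hτ => setLIntegral_congr_fun measurableSet_Icc fun u hu => ?_
  rw [h ⟨hu.1, by linarith [hu.2, hτ.1]⟩, h ⟨by linarith [hu.1, hτ.1], by linarith [hu.2]⟩]

theorem setLIntegral_edist_le_mul_shiftVar (f : ℝ → N) {s t τ : ℝ} (hτ : τ ∈ Ioo 0 (t - s)) :
    ∫⁻ u in Icc s (t - τ), edist (f u) (f (u + τ)) ≤ ENNReal.ofReal τ * shiftVar f s t := by
  have hτ0 : ENNReal.ofReal τ ≠ 0 := (ENNReal.ofReal_pos.2 hτ.1).ne'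
  have hle : ∫⁻ u in Icc s (t - τ), edist (f u) (f (u + τ)) / ENNReal.ofReal τ ≤
      shiftVar f s t :=
    le_iSup₂_of_le τ hτ le_rfl
  simp_rw [div_eq_mul_inv] at hle
  rw [lintegral_mul_const' _ _ (ENNReal.inv_ne_top.2 hτ0), ← div_eq_mul_inv,
    ENNReal.div_le_iff_le_mul (Or.inl hτ0) (Or.inl ENNReal.ofReal_ne_top)] at hle
  rwa [mul_comm]

def rightMeanOsc (f : ℝ → N) (x τ : ℝ) : ℝ≥0∞ :=
  (∫⁻ y in Ioc x (x + τ), edist (f y) (f x)) / ENNReal.ofReal τ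

def IsRightLebesguePoint (f : ℝ → N) (x : ℝ) : Prop :=
  Tendsto (rightMeanOsc f x) (𝓝[>] 0) (𝓝 0)

variable [MeasurableSpace N] [OpensMeasurableSpace N]

open IsUnifLocDoublingMeasure in
theorem ae_isRightLebesguePoint {f : ℝ → N} (hf : Measurable f) {I : Set ℝ}
    (hI : MeasurableSet I) (hsep : IsSeparable (f '' I))
    (hint : ∀ e, ∫⁻ y in I, edist (f y) e ≠ ∞) :
    ∀ᵐ x, x ∈ interior I → IsRightLebesguePoint f x := by
  obtain ⟨c, hc, hfc⟩ := hsep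
  set φ : N → ℝ → ℝ≥0∞ := fun e => I.indicator fun y => edist (f y) e
  have hmean : ∀ᵐ x, ∀ e ∈ c, Tendsto (fun τ => (∫⁻ y in Icc x (x + τ), φ e y) /
      volume (Icc x (x + τ))) (𝓝[>] 0) (𝓝 (φ e x)) := by
    refine (ae_ball_iff hc).2 fun e _ => ?_
    filter_upwards [(vitaliFamily volume 1).ae_tendsto_lintegral_div'
      ((measurable_edist_left.comp hf).indicator hI) (by rw [lintegral_indicator hI]; exact hint e)]
      with x hx using hx.comp (tendsto_Icc_add_vitaliFamily x)
  filter_upwards [hmean] with x hx hxI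
  refine ENNReal.tendsto_nhds_zero.2 fun ε hε => ?_
  obtain ⟨e, he, hxe⟩ : ∃ e ∈ c, edist (f x) e < ε / 2 :=
    EMetric.mem_closure_iff.1 (hfc ⟨x, interior_subset hxI, rfl⟩) _ (ENNReal.half_pos hε.ne')
  have hφx : φ e x = edist (f x) e := indicator_of_mem (interior_subset hxI) _
  filter_upwards [(tendsto_order.1 (hx e he)).2 (ε / 2) (hφx ▸ hxe),
    (tendsto_Icc_add_vitaliFamily x).eventually
      ((vitaliFamily volume 1).eventually_filterAt_subset_of_nhds
        (mem_interior_iff_mem_nhds.1 hxI)),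
    self_mem_nhdsWithin] with τ hτ hτI (hτ0 : 0 < τ)
  have hvol : volume (Icc x (x + τ)) = ENNReal.ofReal τ := by simp [Real.volume_Icc]
  have hτ0' : ENNReal.ofReal τ ≠ 0 := (ENNReal.ofReal_pos.2 hτ0).ne'
  rw [hvol] at hτ
  calc rightMeanOsc f x τ
      ≤ (∫⁻ y in Icc x (x + τ), (φ e y + edist (f x) e)) / ENNReal.ofReal τ := by
        unfold rightMeanOsc
        gcongr ?_ / _
        refine (lintegral_mono_set Ioc_subset_Icc_self).trans
          (setLIntegral_mono' measurableSet_Icc fun y hy => ?_)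
        rw [show φ e y = edist (f y) e from indicator_of_mem (hτI hy) _]
        exact edist_triangle_right _ _ _
    _ = (∫⁻ y in Icc x (x + τ), φ e y) / ENNReal.ofReal τ + edist (f x) e := by
        rw [lintegral_add_right _ measurable_const, setLIntegral_const, hvol, ENNReal.add_div,
          ENNReal.mul_div_cancel_right hτ0' ENNReal.ofReal_ne_top]
    _ ≤ ε / 2 + ε / 2 := add_le_add hτ.le hxe.le
    _ = ε := ENNReal.add_halves ε

theorem ofReal_mul_edist_le_setLIntegral_edist {f : ℝ → N} (hf : Measurable f) {x x' τ : ℝ}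
    (hxx' : x ≤ x') (hτ : 0 ≤ τ) (hint : ∫⁻ y in Ioc x (x' + τ), edist (f y) (f x') ≠ ∞) :
    ENNReal.ofReal τ * edist (f x) (f x') ≤
      (∫⁻ y in Ioc x x', edist (f y) (f (y + τ))) + (∫⁻ y in Ioc x (x + τ), edist (f y) (f x)) +
        ∫⁻ y in Ioc x' (x' + τ), edist (f y) (f x') := by
  set φ : ℝ → ℝ≥0∞ := fun y => edist (f y) (f x')
  have hφ : Measurable φ := measurable_edist_left.comp hf
  have hsplit : ∀ {p q r : ℝ}, p ≤ q → q ≤ r →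
      ∫⁻ y in Ioc p r, φ y = (∫⁻ y in Ioc p q, φ y) + ∫⁻ y in Ioc q r, φ y := fun hpq hqr => by
    rw [← Ioc_union_Ioc_eq_Ioc hpq hqr,
      lintegral_union measurableSet_Ioc (Ioc_disjoint_Ioc_of_le le_rfl)]
  have hstart : ENNReal.ofReal τ * edist (f x) (f x') ≤
      (∫⁻ y in Ioc x (x + τ), edist (f y) (f x)) + ∫⁻ y in Ioc x (x + τ), φ y := by
    calc ENNReal.ofReal τ * edist (f x) (f x')
        = ∫⁻ _ in Ioc x (x + τ), edist (f x) (f x') := by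
          rw [setLIntegral_const, Real.volume_Ioc, add_sub_cancel_left, mul_comm]
      _ ≤ ∫⁻ y in Ioc x (x + τ), (edist (f y) (f x) + φ y) :=
          lintegral_mono fun y => edist_triangle_left _ _ _
      _ = _ := lintegral_add_right _ hφ
  have hshift : ∫⁻ y in Ioc x x', φ y ≤
      (∫⁻ y in Ioc x x', edist (f y) (f (y + τ))) + ∫⁻ y in Ioc (x + τ) (x' + τ), φ y := by
    calc ∫⁻ y in Ioc x x', φ y ≤ ∫⁻ y in Ioc x x', (edist (f y) (f (y + τ)) + φ (y + τ)) :=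
          lintegral_mono fun y => edist_triangle _ _ _
      _ = _ := by
          rw [lintegral_add_right (g := fun y => φ (y + τ)) _ (hφ.comp (measurable_add_const τ)),
            (measurePreserving_add_right volume τ).setLIntegral_comp_emb
              (measurableEmbedding_addRight τ), image_add_const_Ioc]
  have hend : ∫⁻ y in Ioc x (x + τ), φ y ≤
      (∫⁻ y in Ioc x x', edist (f y) (f (y + τ))) + ∫⁻ y in Ioc x' (x' + τ), φ y := by
    have hfin : ∫⁻ y in Ioc (x + τ) (x' + τ), φ y ≠ ∞ :=
      ne_top_of_le_ne_top hint (lintegral_mono_set (Ioc_subset_Ioc_left (by linarith)))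
    refine ENNReal.le_of_add_le_add_right hfin ?_
    calc (∫⁻ y in Ioc x (x + τ), φ y) + ∫⁻ y in Ioc (x + τ) (x' + τ), φ y
        = (∫⁻ y in Ioc x x', φ y) + ∫⁻ y in Ioc x' (x' + τ), φ y := by
          rw [← hsplit (by linarith) (by linarith), ← hsplit hxx' (by linarith)]
      _ ≤ _ := by gcongr
      _ = _ := add_right_comm _ _ _
  calc ENNReal.ofReal τ * edist (f x) (f x') ≤ _ := hstart
    _ ≤ _ := by gcongr
    _ = _ := (add_left_comm _ _ _).trans (add_assoc _ _ _).symm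

theorem sum_edist_le_shiftVar_add {f : ℝ → N} (hf : Measurable f) {s t : ℝ}
    (hint : ∀ e, ∫⁻ y in Icc s t, edist (f y) e ≠ ∞) {u : ℕ → ℝ} (hu : Monotone u)
    (hus : ∀ i, u i ∈ Ioo s t) (n : ℕ) {τ : ℝ} (hτ : τ ∈ Ioo 0 (t - u n)) :
    ∑ i ∈ Finset.range n, edist (f (u (i + 1))) (f (u i)) ≤ shiftVar f s t +
      ∑ i ∈ Finset.range n, (rightMeanOsc f (u i) τ + rightMeanOsc f (u (i + 1)) τ) := by
  set c := ENNReal.ofReal τ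
  have hc0 : c ≠ 0 := (ENNReal.ofReal_pos.2 hτ.1).ne'
  set A : ℝ → ℝ≥0∞ := fun x => ∫⁻ y in Ioc x (x + τ), edist (f y) (f x)
  have hpair : ∀ i ∈ Finset.range n, edist (f (u (i + 1))) (f (u i)) * c ≤
      (∫⁻ y in Ioc (u i) (u (i + 1)), edist (f y) (f (y + τ))) + (A (u i) + A (u (i + 1))) := by
    intro i hi
    have hin : u (i + 1) ≤ u n := hu (Finset.mem_range.1 hi)
    have hsub : Ioc (u i) (u (i + 1) + τ) ⊆ Icc s t := fun y hy =>
      ⟨((hus i).1.trans hy.1).le, by linarith [hy.2, hτ.2]⟩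
    rw [edist_comm, mul_comm, ← add_assoc]
    exact ofReal_mul_edist_le_setLIntegral_edist hf (hu i.le_succ) hτ.1.le
      (ne_top_of_le_ne_top (hint _) (lintegral_mono_set hsub))
  have hD : ∫⁻ y in Ioc (u 0) (u n), edist (f y) (f (y + τ)) ≤ c * shiftVar f s t :=
    (lintegral_mono_set (show Ioc (u 0) (u n) ⊆ Icc s (t - τ) from fun y hy =>
      ⟨((hus 0).1.trans hy.1).le, by linarith [hy.2, hτ.2]⟩)).trans
      (setLIntegral_edist_le_mul_shiftVar f ⟨hτ.1, by linarith [hτ.2, (hus n).1]⟩)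
  calc ∑ i ∈ Finset.range n, edist (f (u (i + 1))) (f (u i))
      = (∑ i ∈ Finset.range n, edist (f (u (i + 1))) (f (u i))) * c / c :=
        (ENNReal.mul_div_cancel_right hc0 ENNReal.ofReal_ne_top).symm
    _ ≤ (∑ i ∈ Finset.range n, ((∫⁻ y in Ioc (u i) (u (i + 1)), edist (f y) (f (y + τ))) +
          (A (u i) + A (u (i + 1))))) / c := by
        rw [Finset.sum_mul]
        gcongr with i hi
        exact hpair i hi
    _ = ((∫⁻ y in Ioc (u 0) (u n), edist (f y) (f (y + τ))) +
          ∑ i ∈ Finset.range n, (A (u i) + A (u (i + 1)))) / c := by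
        rw [Finset.sum_add_distrib, sum_setLIntegral_Ioc_eq hu]
    _ ≤ (c * shiftVar f s t + ∑ i ∈ Finset.range n, (A (u i) + A (u (i + 1)))) / c := by gcongr
    _ = _ := by
        rw [ENNReal.add_div, mul_comm, ENNReal.mul_div_cancel_right hc0 ENNReal.ofReal_ne_top]
        simp only [rightMeanOsc, div_eq_mul_inv, Finset.sum_mul, add_mul, A, c]

theorem eVariationOn_le_shiftVar {f : ℝ → N} (hf : Measurable f) {s t : ℝ}
    (hint : ∀ e, ∫⁻ y in Icc s t, edist (f y) e ≠ ∞) {L : Set ℝ} (hLst : L ⊆ Ioo s t)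
    (hL : ∀ x ∈ L, IsRightLebesguePoint f x) :
    eVariationOn f L ≤ shiftVar f s t := by
  refine iSup_le fun ⟨n, u, hu, huL⟩ => ?_
  have hlim : Tendsto (fun τ => shiftVar f s t + ∑ i ∈ Finset.range n,
      (rightMeanOsc f (u i) τ + rightMeanOsc f (u (i + 1)) τ)) (𝓝[>] 0)
      (𝓝 (shiftVar f s t)) := by
    simpa using tendsto_const_nhds.add
      (tendsto_finsetSum _ fun i _ => (hL _ (huL i)).add (hL _ (huL (i + 1))))
  refine ge_of_tendsto hlim ?_
  filter_upwards [Ioo_mem_nhdsGT (sub_pos.2 (hLst (huL n)).2)] with τ hτ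
  exact sum_edist_le_shiftVar_add hf hint hu (fun i => hLst (huL i)) n hτ

end PseudoEMetric

section Metric

variable {N : Type*} [MetricSpace N]

theorem essVar_congr {f g : ℝ → N} {s : Set ℝ} (h : f =ᵐ[volume.restrict s] g) :
    essVar f s = essVar g s :=
  le_antisymm (le_iInf₂ fun k hk => iInf₂_le k (h.trans hk))
    (le_iInf₂ fun k hk => iInf₂_le k (h.symm.trans hk))

theorem shiftVar_le_essVar (f : ℝ → N) (s t : ℝ) : shiftVar f s t ≤ essVar f (Ioo s t) := by
  refine iSup₂_le fun τ hτ => le_iInf₂ fun g hg => ?_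
  have hτ0 : ENNReal.ofReal τ ≠ 0 := (ENNReal.ofReal_pos.2 hτ.1).ne'
  have hfg : ∀ᵐ u ∂volume.restrict (Ioo s (t - τ)), f u = g u :=
    ae_restrict_of_ae_restrict_of_subset (Ioo_subset_Ioo_right (by linarith [hτ.1])) hg
  have hfg' : ∀ᵐ u ∂volume.restrict (Ioo s (t - τ)), f (u + τ) = g (u + τ) := by
    have := (measurePreserving_add_right volume τ).quasiMeasurePreserving.ae
      ((ae_restrict_iff' measurableSet_Ioo).1 hg)
    filter_upwards [ae_restrict_of_ae this, ae_restrict_mem measurableSet_Ioo] with u hu hmem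
    exact hu ⟨by linarith [hmem.1, hτ.1], by linarith [hmem.2]⟩
  calc ∫⁻ u in Icc s (t - τ), edist (f u) (f (u + τ)) / ENNReal.ofReal τ
      = (∫⁻ u in Ioo s (t - τ), edist (g u) (g (u + τ))) / ENNReal.ofReal τ := by
        rw [← setLIntegral_congr Ioo_ae_eq_Icc, div_eq_mul_inv, ← lintegral_mul_const' _ _
          (ENNReal.inv_ne_top.2 hτ0)]
        refine lintegral_congr_ae ?_
        filter_upwards [hfg, hfg'] with u h1 h2
        rw [h1, h2, div_eq_mul_inv]
    _ ≤ ENNReal.ofReal τ * eVariationOn g (Ioo s t) / ENNReal.ofReal τ := by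
        gcongr
        exact setLIntegral_edist_comp_add_le_eVariationOn g s t hτ.1
    _ = eVariationOn g (Ioo s t) := by
        rw [mul_comm, ENNReal.mul_div_cancel_right hτ0 ENNReal.ofReal_ne_top]

variable [CompleteSpace N] [MeasurableSpace N] [OpensMeasurableSpace N]

theorem essVar_le_shiftVar {f : ℝ → N} (hf : Measurable f) {s t : ℝ}
    (hsep : IsSeparable (f '' Icc s t)) (hint : ∀ e, ∫⁻ y in Icc s t, edist (f y) e ≠ ∞) :
    essVar f (Ioo s t) ≤ shiftVar f s t := by
  set L := {x | x ∈ Ioo s t ∧ IsRightLebesguePoint f x}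
  have hL : ∀ᵐ x ∂volume.restrict (Ioo s t), x ∈ L := by
    rw [ae_restrict_iff' measurableSet_Ioo]
    filter_upwards [ae_isRightLebesguePoint hf measurableSet_Icc hsep hint] with x hx hxst
    exact ⟨hxst, hx (by rwa [interior_Icc])⟩
  obtain ⟨g, hgf, hg⟩ := exists_eqOn_eVariationOn_le f fun x hx =>
    nhdsWithin_inter_Iio_neBot_of_ae_mem hL hx.1
  calc essVar f (Ioo s t) ≤ eVariationOn g (Ioo s t) :=
        iInf₂_le g (by filter_upwards [hL] with x hx using (hgf hx).symm)
    _ ≤ eVariationOn f L := hg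
    _ ≤ shiftVar f s t := eVariationOn_le_shiftVar hf hint (fun x hx => hx.1) fun x hx => hx.2

theorem essVar_eq_shiftVar {f : ℝ → N} (hf : Measurable f) {s t : ℝ}
    (hsep : IsSeparable (f '' Icc s t)) (hint : ∀ e, ∫⁻ y in Icc s t, edist (f y) e ≠ ∞) :
    essVar f (Ioo s t) = shiftVar f s t :=
  (essVar_le_shiftVar hf hsep hint).antisymm (shiftVar_le_essVar f s t)

end Metric

theorem setLIntegral_edist_ne_top {α N : Type*} [MeasurableSpace α] [PseudoMetricSpace N]
    {μ : Measure α} {f : α → N} {I : Set α} (hI : μ I ≠ ∞) {y₀ : N}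
    (h : ∫⁻ x in I, edist (f x) y₀ ∂μ ≠ ∞) (e : N) : ∫⁻ x in I, edist (f x) e ∂μ ≠ ∞ := by
  refine ne_top_of_le_ne_top ?_ (lintegral_mono fun x => edist_triangle (f x) y₀ e)
  rw [lintegral_add_right _ measurable_const, setLIntegral_const]
  exact ENNReal.add_ne_top.2 ⟨h, ENNReal.mul_ne_top (edist_ne_top _ _) hI⟩

/-- For a Borel measurable, separably valued, integrable `f : [a,b] → N` into a complete
metric space: (i) `essVar(f;(a,b)) < ∞` iff `sup_{0<τ<b−a} ∫_a^{b−τ} d(f(t),f(t+τ))/τ dt < ∞`;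
(ii) if these are finite, then for all `a ≤ s < t ≤ b`,
`essVar(f;(s,t)) = sup_{0<τ<t−s} ∫_s^{t−τ} d(f(u),f(u+τ))/τ du`. -/
theorem stmt3 {N : Type*} [MetricSpace N] [MeasurableSpace N] [BorelSpace N] [CompleteSpace N]
    (a b : ℝ) (hab : a < b) (f : ℝ → N)
    (hmeas : Measurable ((Set.Icc a b).restrict f))
    (hsep : TopologicalSpace.IsSeparable (f '' Set.Icc a b))
    (y₀ : N) (hfin : ∫⁻ t in Set.Icc a b, edist (f t) y₀ < ∞) :
    (essVar f (Set.Ioo a b) ≠ ∞ ↔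
      (⨆ τ ∈ Set.Ioo (0:ℝ) (b - a),
          ∫⁻ t in Set.Icc a (b - τ), edist (f t) (f (t + τ)) / ENNReal.ofReal τ) ≠ ∞) ∧
    (essVar f (Set.Ioo a b) ≠ ∞ →
      ∀ s t : ℝ, a ≤ s → s < t → t ≤ b →
        essVar f (Set.Ioo s t)
          = ⨆ τ ∈ Set.Ioo (0:ℝ) (t - s),
              ∫⁻ u in Set.Icc s (t - τ), edist (f u) (f (u + τ)) / ENNReal.ofReal τ) := by
  set F : ℝ → N := IccExtend hab.le fun x : Icc a b => f x
  have hFf : EqOn F f (Icc a b) := fun x hx => IccExtend_of_mem hab.le _ hx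
  have hF : Measurable F := hmeas.comp continuous_projIcc.measurable
  have key : ∀ s t, a ≤ s → t ≤ b → essVar f (Ioo s t) = shiftVar f s t := by
    intro s t has htb
    have hsub : Icc s t ⊆ Icc a b := Icc_subset_Icc has htb
    rw [← essVar_congr (ae_restrict_of_forall_mem measurableSet_Ioo
        (hFf.mono (Ioo_subset_Icc_self.trans hsub))), ← shiftVar_congr (hFf.mono hsub)]
    refine essVar_eq_shiftVar hF (((hFf.mono hsub).image_eq).symm ▸ hsep.mono (image_mono hsub))
      fun e => ne_top_of_le_ne_top (setLIntegral_edist_ne_top measure_Icc_lt_top.ne hfin.ne e) ?_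
    calc ∫⁻ y in Icc s t, edist (F y) e = ∫⁻ y in Icc s t, edist (f y) e :=
          setLIntegral_congr_fun measurableSet_Icc fun y hy => by rw [hFf (hsub hy)]
      _ ≤ ∫⁻ y in Icc a b, edist (f y) e := lintegral_mono_set hsub
  exact ⟨by rw [key a b le_rfl le_rfl]; rfl, fun _ s t hs _ ht => key s t hs ht⟩
end
end
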